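/- arXiv:2104.10053 — 3 statements merged into one kernel-verified Lean document; each statement's English description precedes it below -/
import Mathlib

section
/- Smallness of the near-singular part of the linearized operator (first estimate of Lemma 2.3): Let -3 < γ < 0, β ≥ 0, 0 < q < 1, ϑ ≥ 0. There exists a constant C > 0 such that for every ε ∈ (0,1), every t ≥ 0, every v ∈ ℝ³, and every measurable f : ℝ³ → ℝ with ‖w_{q,ϑ,β}(·,t) f‖_{L^∞} < ∞: w_{q,ϑ,β}(v,t) ∫_{|v-u|≤2ε} ∫_{S²} |v-u|^γ q₀(θ) √μ(u) [√μ(v)|f(u)| + √μ(v')|f(u')| + √μ(u')|f(v')|] dω du ≤ C μ(v)^{(1-q)/8} ε^{γ+3} ‖w_{q,ϑ,β}(·,t) f‖_{L^∞}. -/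
noncomputable section

open MeasureTheory Real
open scoped ENNReal

/-- Velocity space `ℝ³`. -/
abbrev V3 : Type := EuclideanSpace ℝ (Fin 3)

/-- The spatial torus `𝕋³`. -/
abbrev T3 : Type := Fin 3 → AddCircle (1 : ℝ)

/-- The global Maxwellian `μ(v) = (2π)^{-3/2} e^{-|v|²/2}`. -/
def gMaxw (v : V3) : ℝ := (2 * π) ^ (-(3 : ℝ) / 2) * Real.exp (-‖v‖ ^ 2 / 2)

/-- Real inner product on `ℝ³`. -/
def rinner (x y : V3) : ℝ := inner ℝ x y

/-- Post-collisional velocity `u' = u + ((v-u)·ω) ω`. -/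
def uPost (u v ω : V3) : V3 := u + rinner (v - u) ω • ω

/-- Post-collisional velocity `v' = v - ((v-u)·ω) ω`. -/
def vPost (u v ω : V3) : V3 := v - rinner (v - u) ω • ω

/-- The cosine `cos θ = (v-u)·ω/|v-u|`. -/
def cosAngle (u v ω : V3) : ℝ := rinner (v - u) ω / ‖v - u‖

/-- Surface measure on the unit sphere `S² ⊆ ℝ³`. -/
def sphMeasure : Measure (Metric.sphere (0 : V3) 1) := (volume : Measure V3).toSphere

/-- The soft potential collision kernel `B(v-u,ω) = |v-u|^γ q₀(cos θ)`. -/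
def Bker (γ : ℝ) (q₀ : ℝ → ℝ) (u v ω : V3) : ℝ := ‖v - u‖ ^ γ * q₀ (cosAngle u v ω)

/-- The collision frequency `ν(v)`. -/
def nuColl (γ : ℝ) (q₀ : ℝ → ℝ) (v : V3) : ℝ :=
  ∫ u : V3, ∫ ω : Metric.sphere (0 : V3) 1, Bker γ q₀ u v ω * gMaxw u ∂sphMeasure

/-- The Boltzmann collision operator `Q(G,F)`. -/
def Qop (γ : ℝ) (q₀ : ℝ → ℝ) (G F : V3 → ℝ) (v : V3) : ℝ :=
  ∫ u : V3, ∫ ω : Metric.sphere (0 : V3) 1,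
    Bker γ q₀ u v ω * (G (uPost u v ω) * F (vPost u v ω) - G u * F v) ∂sphMeasure

/-- Gain part `K₂ g` of the linearized operator. -/
def Kgain (γ : ℝ) (q₀ : ℝ → ℝ) (g : V3 → ℝ) (v : V3) : ℝ :=
  ∫ u : V3, ∫ ω : Metric.sphere (0 : V3) 1,
    Bker γ q₀ u v ω * Real.sqrt (gMaxw u) *
      (Real.sqrt (gMaxw (vPost u v ω)) * g (uPost u v ω)
        + Real.sqrt (gMaxw (uPost u v ω)) * g (vPost u v ω)) ∂sphMeasure

/-- Loss part `K₁ g` of the linearized operator. -/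
def Kloss (γ : ℝ) (q₀ : ℝ → ℝ) (g : V3 → ℝ) (v : V3) : ℝ :=
  ∫ u : V3, ∫ ω : Metric.sphere (0 : V3) 1,
    Bker γ q₀ u v ω * Real.sqrt (gMaxw u) * Real.sqrt (gMaxw v) * g u ∂sphMeasure

/-- The integral operator `K = K₂ - K₁`. -/
def Kop (γ : ℝ) (q₀ : ℝ → ℝ) (g : V3 → ℝ) (v : V3) : ℝ := Kgain γ q₀ g v - Kloss γ q₀ g v

/-- The nonlinear gain term `Γ₊(g,f)`. -/
def GammaPlus (γ : ℝ) (q₀ : ℝ → ℝ) (g f : V3 → ℝ) (v : V3) : ℝ :=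
  ∫ u : V3, ∫ ω : Metric.sphere (0 : V3) 1,
    Bker γ q₀ u v ω * Real.sqrt (gMaxw u) * g (uPost u v ω) * f (vPost u v ω) ∂sphMeasure

/-- The nonlinear loss term `Γ₋(g,f)`. -/
def GammaMinus (γ : ℝ) (q₀ : ℝ → ℝ) (g f : V3 → ℝ) (v : V3) : ℝ :=
  f v * ∫ u : V3, ∫ ω : Metric.sphere (0 : V3) 1,
    Bker γ q₀ u v ω * Real.sqrt (gMaxw u) * g u ∂sphMeasure

/-- The time-dependent velocity weight `w_{q,ϑ,β}(v,t)`. -/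
def wgt (q ϑ β : ℝ) (v : V3) (t : ℝ) : ℝ :=
  (1 + ‖v‖ ^ 2) ^ β * Real.exp (q / 8 * (1 + (1 + t) ^ (-ϑ)) * ‖v‖ ^ 2)

/-- The time-modified collision frequency `ν̃(v,t)`. -/
def nuTilde (γ q ϑ : ℝ) (q₀ : ℝ → ℝ) (v : V3) (t : ℝ) : ℝ :=
  nuColl γ q₀ v + ϑ * q * ‖v‖ ^ 2 / (8 * (1 + t) ^ (ϑ + 1))

/-- Free transport on the torus: `x - s v`. -/
def shiftT (x : T3) (s : ℝ) (v : V3) : T3 := fun i => x i - ((s * v i : ℝ) : AddCircle (1 : ℝ))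

/-- `x + s v` on the torus. -/
def addT (x : T3) (s : ℝ) (v : V3) : T3 := fun i => x i + ((s * v i : ℝ) : AddCircle (1 : ℝ))

/-- `L^∞` norm (in `ℝ≥0∞`) on `𝕋³ × ℝ³`. -/
def linfXV (g : T3 → V3 → ℝ) : ℝ≥0∞ :=
  eLpNorm (fun p : T3 × V3 => g p.1 p.2) ⊤ volume

/-- `L^∞` norm (as a real number) on `𝕋³ × ℝ³`. -/
def linfXVr (g : T3 → V3 → ℝ) : ℝ := (linfXV g).toReal

/-- The relative entropy `ℰ(F)`. -/
def relEntropy (F : T3 → V3 → ℝ) : ℝ :=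
  ∫ x : T3, ∫ v : V3,
    (F x v / gMaxw v * Real.log (F x v / gMaxw v) - F x v / gMaxw v + 1) * gMaxw v

/-- `h = w f` is a mild solution of the perturbed Boltzmann equation on the time
interval `[0,T]` (Duhamel identity along characteristics). -/
def IsMildSolutionOn (γ q ϑ β : ℝ) (q₀ : ℝ → ℝ) (f : ℝ → T3 → V3 → ℝ) (T : ℝ) : Prop :=
  ∀ t : ℝ, 0 ≤ t → t ≤ T → ∀ᵐ p : T3 × V3,
    wgt q ϑ β p.2 t * f t p.1 p.2 =
      Real.exp (-(∫ τ in (0 : ℝ)..t, nuTilde γ q ϑ q₀ p.2 τ)) *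
          (wgt q ϑ β p.2 0 * f 0 (shiftT p.1 t p.2) p.2)
      + ∫ s in (0 : ℝ)..t,
          Real.exp (-(∫ τ in s..t, nuTilde γ q ϑ q₀ p.2 τ)) *
            (wgt q ϑ β p.2 s *
              (Kop γ q₀ (f s (shiftT p.1 (t - s) p.2)) p.2
                + GammaPlus γ q₀ (f s (shiftT p.1 (t - s) p.2))
                    (f s (shiftT p.1 (t - s) p.2)) p.2
                - GammaMinus γ q₀ (f s (shiftT p.1 (t - s) p.2))
                    (f s (shiftT p.1 (t - s) p.2)) p.2))

/-- `h = w f` is a global-in-time mild solution of the perturbed Boltzmann equation. -/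
def IsMildSolution (γ q ϑ β : ℝ) (q₀ : ℝ → ℝ) (f : ℝ → T3 → V3 → ℝ) : Prop :=
  ∀ T : ℝ, 0 ≤ T → IsMildSolutionOn γ q ϑ β q₀ f T

/-!
On the region `|v - u| ≤ 2ε ≤ 2`, each of the three terms carries a Maxwellian factor
`√μ(u) √μ(x)` and a value `|f(y)| ≤ M e^{-a|y|²}` (where `w = (1+|·|²)^β e^{a|·|²}`, `a ≤ 1/4`)
with `|x|² + |y|² = |u|² + |v|²` by energy conservation. Since `|u| ≥ |v| - 2`, this absorbs the
weight `w(v,t)` and leaves `(1+|v|²)^β e^{-|v|²/8} ≲ μ(v)^{(1-q)/8}`. As `q₀ ≤ C₀`, what remains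
is `∫_{|v-u| ≤ 2ε} |v-u|^γ du`, which in polar coordinates equals `4π (2ε)^{γ+3}/(γ+3)`, finite
because `γ > -3`.
-/

open Set Metric

lemma exists_one_add_rpow_le_mul_exp {β b : ℝ} (hβ : 0 ≤ β) (hb : 0 < b) :
    ∃ K, 0 < K ∧ ∀ s, 0 ≤ s → (1 + s) ^ β ≤ K * exp (b * s) := by
  set c := b / (β + 1) with hc_def
  have hc : 0 < c := by positivity
  refine ⟨(1 + c⁻¹) ^ β, by positivity, fun s hs => ?_⟩
  have hlin : 1 + s ≤ (1 + c⁻¹) * exp (c * s) := by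
    have h1 : 1 ≤ exp (c * s) := one_le_exp (by positivity)
    have h2 : s ≤ c⁻¹ * exp (c * s) := by
      rw [le_inv_mul_iff₀ hc]; linarith [add_one_le_exp (c * s)]
    linarith
  have hcβ : c * β ≤ b := by
    rw [hc_def, div_mul_eq_mul_div, div_le_iff₀ (by linarith)]; nlinarith
  calc (1 + s) ^ β ≤ ((1 + c⁻¹) * exp (c * s)) ^ β := by gcongr
    _ = (1 + c⁻¹) ^ β * exp (c * β * s) := by
      rw [mul_rpow (by positivity) (exp_nonneg _), ← exp_mul]; ring_nf
    _ ≤ (1 + c⁻¹) ^ β * exp (b * s) := by gcongr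

lemma pow_smul_indicator_Iic_rpow_eqOn {n : ℕ} (hn : n ≠ 0) (γ R : ℝ) :
    EqOn (fun y : ℝ => y ^ (n - 1) • (Iic R).indicator (· ^ γ) y)
      ((Iic R).indicator (· ^ (γ + n - 1))) (Ioi 0) := by
  intro y (hy : 0 < y)
  by_cases hyR : y ≤ R
  · have hd : ((n - 1 : ℕ) : ℝ) = n - 1 := by
      rw [Nat.cast_sub (Nat.one_le_iff_ne_zero.mpr hn)]; simp
    simp only [indicator_of_mem (show y ∈ Iic R from hyR), smul_eq_mul,
      ← Real.rpow_natCast, hd, ← Real.rpow_add hy]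
    ring_nf
  · simp [indicator_of_notMem (show y ∉ Iic R from hyR)]

lemma indicator_Iic_comp_norm_sub {E : Type*} [SeminormedAddGroup E] (g : ℝ → ℝ) (R : ℝ)
    (v : E) : (fun u => (Iic R).indicator g ‖v - u‖)
      = {u | ‖v - u‖ ≤ R}.indicator (fun u => g ‖v - u‖) :=
  funext fun _ => (indicator_comp_right (fun u => ‖v - u‖)).symm

lemma measurableSet_norm_sub_le {E : Type*} [NormedAddCommGroup E] [MeasurableSpace E]
    [OpensMeasurableSpace E] (v : E) (R : ℝ) : MeasurableSet {u | ‖v - u‖ ≤ R} :=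
  measurableSet_le (continuous_const.sub continuous_id).norm.measurable measurable_const

section RadialIntegral

variable {E : Type*} [NormedAddCommGroup E] [NormedSpace ℝ E] [FiniteDimensional ℝ E]
  [MeasurableSpace E] [BorelSpace E] [Nontrivial E] (μ : Measure E) [μ.IsAddHaarMeasure]
  {γ : ℝ}

lemma integrable_indicator_Iic_rpow_norm (hγ : -(Module.finrank ℝ E : ℝ) < γ) (R : ℝ) :
    Integrable (fun x : E => (Iic R).indicator (· ^ γ) ‖x‖) μ := by
  rw [integrable_fun_norm_addHaar μ, integrableOn_congr_fun
    (pow_smul_indicator_Iic_rpow_eqOn Module.finrank_pos.ne' γ R) measurableSet_Ioi,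
    IntegrableOn, integrable_indicator_iff measurableSet_Iic, IntegrableOn,
    Measure.restrict_restrict measurableSet_Iic, inter_comm, Ioi_inter_Iic]
  rcases le_or_gt R 0 with hR | hR
  · simp [Ioc_eq_empty_of_le hR]
  · exact (intervalIntegrable_iff_integrableOn_Ioc_of_le hR.le).mp
      (intervalIntegral.intervalIntegrable_rpow' (by linarith))

lemma integral_indicator_Iic_rpow_norm (hγ : -(Module.finrank ℝ E : ℝ) < γ) {R : ℝ}
    (hR : 0 ≤ R) :
    ∫ x : E, (Iic R).indicator (· ^ γ) ‖x‖ ∂μ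
      = Module.finrank ℝ E * μ.real (ball 0 1) *
          (R ^ (γ + Module.finrank ℝ E) / (γ + Module.finrank ℝ E)) := by
  rw [integral_fun_norm_addHaar μ, setIntegral_congr_fun measurableSet_Ioi
    (pow_smul_indicator_Iic_rpow_eqOn Module.finrank_pos.ne' γ R),
    setIntegral_indicator measurableSet_Iic, Ioi_inter_Iic, ← intervalIntegral.integral_of_le hR,
    integral_rpow (Or.inl (by linarith)), Real.zero_rpow (by linarith), nsmul_eq_mul,
    smul_eq_mul]
  ring_nf

variable [μ.IsNegInvariant]

lemma integrableOn_norm_sub_rpow (hγ : -(Module.finrank ℝ E : ℝ) < γ) (v : E) (R : ℝ) :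
    IntegrableOn (fun u => ‖v - u‖ ^ γ) {u | ‖v - u‖ ≤ R} μ := by
  rw [← integrable_indicator_iff (measurableSet_norm_sub_le v R),
    ← indicator_Iic_comp_norm_sub (· ^ γ)]
  exact (integrable_indicator_Iic_rpow_norm μ hγ R).comp_sub_left v

lemma setIntegral_norm_sub_rpow (hγ : -(Module.finrank ℝ E : ℝ) < γ) (v : E) {R : ℝ}
    (hR : 0 ≤ R) :
    ∫ u in {u | ‖v - u‖ ≤ R}, ‖v - u‖ ^ γ ∂μ
      = Module.finrank ℝ E * μ.real (ball 0 1) *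
          (R ^ (γ + Module.finrank ℝ E) / (γ + Module.finrank ℝ E)) := by
  rw [← integral_indicator (measurableSet_norm_sub_le v R),
    ← indicator_Iic_comp_norm_sub (· ^ γ),
    integral_sub_left_eq_self (fun x => (Iic R).indicator (· ^ γ) ‖x‖) μ v,
    integral_indicator_Iic_rpow_norm μ hγ hR]

end RadialIntegral

lemma mul_setIntegral_integral_le {α β : Type*} [MeasurableSpace α] [MeasurableSpace β]
    {μ : Measure α} {ν : Measure β} [IsFiniteMeasure ν] {s : Set α} (hs : MeasurableSet s)
    {F : α → β → ℝ} {g : α → ℝ} {c : ℝ} (hc : 0 ≤ c) (hF : ∀ x y, 0 ≤ F x y)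
    (hg : IntegrableOn g s μ) (hFg : ∀ x ∈ s, ∀ y, c * F x y ≤ g x) :
    c * ∫ x in s, ∫ y, F x y ∂ν ∂μ ≤ ν.real univ * ∫ x in s, g x ∂μ := by
  rw [← integral_const_mul, ← integral_const_mul]
  refine integral_mono_of_nonneg (.of_forall fun x => ?_) (hg.const_mul _)
    ((ae_restrict_iff' hs).mpr (.of_forall fun x hx => ?_))
  · exact mul_nonneg hc (integral_nonneg (hF x))
  · calc c * ∫ y, F x y ∂ν = ∫ y, c * F x y ∂ν := (integral_const_mul _ _).symm
      _ ≤ ∫ _, g x ∂ν := integral_mono_of_nonneg (.of_forall fun y => mul_nonneg hc (hF x y))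
          (integrable_const _) (.of_forall (hFg x hx))
      _ = ν.real univ * g x := by rw [integral_const, smul_eq_mul]

lemma gMaxw_rpow (p : ℝ) (v : V3) :
    gMaxw v ^ p = (2 * π) ^ (-(3 : ℝ) / 2 * p) * exp (-(p * ‖v‖ ^ 2 / 2)) := by
  rw [gMaxw, mul_rpow (by positivity) (exp_nonneg _), ← rpow_mul (by positivity), ← exp_mul]
  ring_nf

lemma sqrt_gMaxw_mul_sqrt_gMaxw (x y : V3) :
    √(gMaxw x) * √(gMaxw y) = (2 * π) ^ (-(3 : ℝ) / 2) * exp (-(‖x‖ ^ 2 / 4) - ‖y‖ ^ 2 / 4) := by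
  rw [sqrt_eq_rpow, sqrt_eq_rpow, gMaxw_rpow, gMaxw_rpow, mul_mul_mul_comm,
    ← rpow_add (by positivity), ← exp_add]
  ring_nf

lemma exists_one_add_rpow_mul_exp_le_gMaxw_rpow {β p : ℝ} (hβ : 0 ≤ β) (hp : p < 1 / 4) :
    ∃ K, 0 < K ∧ ∀ v : V3, (1 + ‖v‖ ^ 2) ^ β * exp (-(‖v‖ ^ 2 / 8)) ≤ K * gMaxw v ^ p := by
  obtain ⟨K, hK, hpoly⟩ := exists_one_add_rpow_le_mul_exp hβ (show 0 < 1 / 8 - p / 2 by linarith)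
  refine ⟨K * (2 * π) ^ ((3 : ℝ) / 2 * p), by positivity, fun v => ?_⟩
  have hπ : (2 * π) ^ ((3 : ℝ) / 2 * p) * (2 * π) ^ (-(3 : ℝ) / 2 * p) = 1 := by
    rw [← rpow_add (by positivity)]; ring_nf; exact rpow_zero _
  calc (1 + ‖v‖ ^ 2) ^ β * exp (-(‖v‖ ^ 2 / 8))
      ≤ K * exp ((1 / 8 - p / 2) * ‖v‖ ^ 2) * exp (-(‖v‖ ^ 2 / 8)) := by
        gcongr; exact hpoly _ (sq_nonneg _)
    _ = K * exp (-(p * ‖v‖ ^ 2 / 2)) := by rw [mul_assoc, ← exp_add]; ring_nf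
    _ = K * (2 * π) ^ ((3 : ℝ) / 2 * p) * gMaxw v ^ p := by
        rw [gMaxw_rpow, mul_assoc K, ← mul_assoc _ _ (exp _), hπ, one_mul]

lemma norm_uPost_sq_add_norm_vPost_sq (u v ω : V3) (hω : ‖ω‖ = 1) :
    ‖uPost u v ω‖ ^ 2 + ‖vPost u v ω‖ ^ 2 = ‖u‖ ^ 2 + ‖v‖ ^ 2 := by
  have hc : rinner (v - u) ω = inner ℝ v ω - inner ℝ u ω := inner_sub_left _ _ _
  simp only [uPost, vPost, norm_add_sq_real, norm_sub_sq_real, real_inner_smul_right,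
    norm_smul, Real.norm_eq_abs, hω, mul_one, sq_abs]
  rw [hc]; ring

lemma abs_cosAngle_le_one (u v ω : V3) (hω : ‖ω‖ = 1) : |cosAngle u v ω| ≤ 1 := by
  rw [cosAngle, abs_div, abs_norm]
  refine div_le_one_of_le₀ ?_ (norm_nonneg _)
  simpa [rinner, hω] using abs_real_inner_le_norm (v - u) ω

lemma nonneg_of_forall_le_mul_abs {q₀ : ℝ → ℝ} {C₀ : ℝ}
    (hq₀ : ∀ s : ℝ, 0 ≤ q₀ s ∧ q₀ s ≤ C₀ * |s|) : 0 ≤ C₀ := by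
  simpa using (hq₀ 1).1.trans (hq₀ 1).2

lemma Bker_nonneg {γ : ℝ} {q₀ : ℝ → ℝ} (hq₀ : ∀ s, 0 ≤ q₀ s) (u v ω : V3) :
    0 ≤ Bker γ q₀ u v ω :=
  mul_nonneg (by positivity) (hq₀ _)

lemma wgt_pos (q ϑ β : ℝ) (v : V3) (t : ℝ) : 0 < wgt q ϑ β v t := by
  unfold wgt; positivity

lemma wgt_exponent_nonneg {q ϑ t : ℝ} (hq0 : 0 ≤ q) (ht : 0 ≤ t) :
    0 ≤ q / 8 * (1 + (1 + t) ^ (-ϑ)) := by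
  have : 0 ≤ (1 + t) ^ (-ϑ) := rpow_nonneg (by linarith) _
  positivity

lemma wgt_exponent_le {q ϑ t : ℝ} (hq0 : 0 ≤ q) (hq1 : q ≤ 1) (hϑ : 0 ≤ ϑ) (ht : 0 ≤ t) :
    q / 8 * (1 + (1 + t) ^ (-ϑ)) ≤ 1 / 4 := by
  have : (1 + t) ^ (-ϑ) ≤ 1 := rpow_le_one_of_one_le_of_nonpos (by linarith) (by linarith)
  nlinarith

lemma abs_le_of_abs_wgt_mul_le {q ϑ β t M : ℝ} (hβ : 0 ≤ β) {f : V3 → ℝ} {y : V3}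
    (hf : |wgt q ϑ β y t * f y| ≤ M) :
    |f y| ≤ M * exp (-(q / 8 * (1 + (1 + t) ^ (-ϑ)) * ‖y‖ ^ 2)) := by
  have hw : exp (q / 8 * (1 + (1 + t) ^ (-ϑ)) * ‖y‖ ^ 2) ≤ wgt q ϑ β y t :=
    le_mul_of_one_le_left (exp_nonneg _) (one_le_rpow (by nlinarith [sq_nonneg ‖y‖]) hβ)
  rw [exp_neg, ← div_eq_mul_inv, le_div_iff₀ (exp_pos _)]
  calc |f y| * exp _ ≤ |f y| * wgt q ϑ β y t := by gcongr
    _ ≤ M := by rwa [abs_mul, abs_of_pos (wgt_pos ..), mul_comm] at hf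

/-- The exponent of `w(v,t) √μ(u) √μ(x) e^{-a|y|²}`, where `(x, y)` is one of `(v, u)`,
`(v', u')`, `(u', v')`. -/
lemma collision_exponent_le {a : ℝ} (ha0 : 0 ≤ a) (ha : a ≤ 1 / 4) {u v x y : V3}
    (huv : ‖v - u‖ ≤ 2) (hxy : ‖x‖ ^ 2 + ‖y‖ ^ 2 = ‖u‖ ^ 2 + ‖v‖ ^ 2) :
    a * ‖v‖ ^ 2 - ‖u‖ ^ 2 / 4 - ‖x‖ ^ 2 / 4 - a * ‖y‖ ^ 2 ≤ 1 - ‖v‖ ^ 2 / 8 := by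
  have hv : ‖v‖ ≤ ‖u‖ + 2 := by
    linarith [norm_le_norm_add_norm_sub' v u, norm_sub_rev u v]
  have hx : a * ‖x‖ ^ 2 ≤ ‖x‖ ^ 2 / 4 := by nlinarith [sq_nonneg ‖x‖]
  nlinarith [norm_nonneg v, norm_nonneg u, sq_nonneg (‖u‖ - 2), mul_nonneg ha0 (sq_nonneg ‖u‖)]

lemma wgt_mul_sqrt_gMaxw_mul_le {q ϑ β t M : ℝ} (hβ : 0 ≤ β) (hq0 : 0 ≤ q) (hq1 : q ≤ 1)
    (hϑ : 0 ≤ ϑ) (ht : 0 ≤ t) {f : V3 → ℝ} {u v x y : V3} (huv : ‖v - u‖ ≤ 2)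
    (hxy : ‖x‖ ^ 2 + ‖y‖ ^ 2 = ‖u‖ ^ 2 + ‖v‖ ^ 2) (hf : |wgt q ϑ β y t * f y| ≤ M) :
    wgt q ϑ β v t * (√(gMaxw u) * (√(gMaxw x) * |f y|))
      ≤ (2 * π) ^ (-(3 : ℝ) / 2) * exp 1 * M * ((1 + ‖v‖ ^ 2) ^ β * exp (-(‖v‖ ^ 2 / 8))) := by
  have hexp := collision_exponent_le (wgt_exponent_nonneg hq0 ht) (wgt_exponent_le hq0 hq1 hϑ ht)
    huv hxy
  set a := q / 8 * (1 + (1 + t) ^ (-ϑ))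
  calc wgt q ϑ β v t * (√(gMaxw u) * (√(gMaxw x) * |f y|))
      = (1 + ‖v‖ ^ 2) ^ β * exp (a * ‖v‖ ^ 2) * (√(gMaxw u) * √(gMaxw x)) * |f y| := by
        rw [wgt]; ring
    _ ≤ (1 + ‖v‖ ^ 2) ^ β * exp (a * ‖v‖ ^ 2) * (√(gMaxw u) * √(gMaxw x)) *
          (M * exp (-(a * ‖y‖ ^ 2))) := by
        gcongr; exact abs_le_of_abs_wgt_mul_le hβ hf
    _ = (2 * π) ^ (-(3 : ℝ) / 2) * M * (1 + ‖v‖ ^ 2) ^ β *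
          exp (a * ‖v‖ ^ 2 - ‖u‖ ^ 2 / 4 - ‖x‖ ^ 2 / 4 - a * ‖y‖ ^ 2) := by
        rw [sqrt_gMaxw_mul_sqrt_gMaxw]
        simp only [sub_eq_add_neg, exp_add]
        ring
    _ ≤ (2 * π) ^ (-(3 : ℝ) / 2) * M * (1 + ‖v‖ ^ 2) ^ β * exp (1 + -(‖v‖ ^ 2 / 8)) := by
        have hM : 0 ≤ M := (abs_nonneg _).trans hf
        gcongr; linarith
    _ = _ := by rw [exp_add]; ring

lemma wgt_mul_Bker_integrand_le {q ϑ β γ C₀ t M : ℝ} {q₀ : ℝ → ℝ} (hβ : 0 ≤ β) (hq0 : 0 ≤ q)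
    (hq1 : q ≤ 1) (hϑ : 0 ≤ ϑ) (ht : 0 ≤ t) (hq₀ : ∀ s : ℝ, 0 ≤ q₀ s ∧ q₀ s ≤ C₀ * |s|)
    {f : V3 → ℝ} (hf : ∀ z, |wgt q ϑ β z t * f z| ≤ M) {u v ω : V3} (hω : ‖ω‖ = 1)
    (huv : ‖v - u‖ ≤ 2) :
    wgt q ϑ β v t * (Bker γ q₀ u v ω * √(gMaxw u) *
        (√(gMaxw v) * |f u| + √(gMaxw (vPost u v ω)) * |f (uPost u v ω)|
          + √(gMaxw (uPost u v ω)) * |f (vPost u v ω)|))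
      ≤ ‖v - u‖ ^ γ * (C₀ * (3 * ((2 * π) ^ (-(3 : ℝ) / 2) * exp 1 * M *
          ((1 + ‖v‖ ^ 2) ^ β * exp (-(‖v‖ ^ 2 / 8)))))) := by
  have hE := norm_uPost_sq_add_norm_vPost_sq u v ω hω
  have hC₀ := nonneg_of_forall_le_mul_abs hq₀
  have hq₀le : q₀ (cosAngle u v ω) ≤ C₀ :=
    (hq₀ _).2.trans (mul_le_of_le_one_right hC₀ (abs_cosAngle_le_one u v ω hω))
  have hterm : ∀ x y : V3, ‖x‖ ^ 2 + ‖y‖ ^ 2 = ‖u‖ ^ 2 + ‖v‖ ^ 2 →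
      wgt q ϑ β v t * (√(gMaxw u) * (√(gMaxw x) * |f y|)) ≤ (2 * π) ^ (-(3 : ℝ) / 2) * exp 1 * M
        * ((1 + ‖v‖ ^ 2) ^ β * exp (-(‖v‖ ^ 2 / 8))) := fun x y hxy =>
    wgt_mul_sqrt_gMaxw_mul_le hβ hq0 hq1 hϑ ht huv hxy (hf y)
  calc wgt q ϑ β v t * (Bker γ q₀ u v ω * √(gMaxw u) *
        (√(gMaxw v) * |f u| + √(gMaxw (vPost u v ω)) * |f (uPost u v ω)|
          + √(gMaxw (uPost u v ω)) * |f (vPost u v ω)|))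
      = ‖v - u‖ ^ γ * q₀ (cosAngle u v ω) *
          (wgt q ϑ β v t * (√(gMaxw u) * (√(gMaxw v) * |f u|))
            + wgt q ϑ β v t * (√(gMaxw u) * (√(gMaxw (vPost u v ω)) * |f (uPost u v ω)|))
            + wgt q ϑ β v t * (√(gMaxw u) * (√(gMaxw (uPost u v ω)) * |f (vPost u v ω)|))) := by
        rw [Bker]; ring
    _ ≤ ‖v - u‖ ^ γ * C₀ * (3 * ((2 * π) ^ (-(3 : ℝ) / 2) * exp 1 * M *
          ((1 + ‖v‖ ^ 2) ^ β * exp (-(‖v‖ ^ 2 / 8))))) := by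
        have hq₀nonneg := (hq₀ (cosAngle u v ω)).1
        rw [show ∀ X : ℝ, 3 * X = X + X + X from fun X => by ring]
        have hB : 0 ≤ ‖v - u‖ ^ γ * C₀ := mul_nonneg (by positivity) hC₀
        have hw := (wgt_pos q ϑ β v t).le
        gcongr _ * ?_ * (?_ + ?_ + ?_)
        exacts [hterm v u (add_comm _ _), hterm _ _ (by linarith), hterm _ _ hE]
    _ = _ := by ring

instance : IsFiniteMeasure sphMeasure := by
  unfold sphMeasure; infer_instance

theorem stmt8_small_singular_part_general
    (γ q ϑ β C₀ : ℝ) (q₀ : ℝ → ℝ)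
    (hγl : -3 < γ) (hβ : 0 ≤ β) (hq0 : 0 < q) (hq1 : q < 1) (hϑ : 0 ≤ ϑ)
    (hq₀ : ∀ s : ℝ, 0 ≤ q₀ s ∧ q₀ s ≤ C₀ * |s|) :
    ∃ C : ℝ, 0 < C ∧
      ∀ ε : ℝ, 0 < ε → ε < 1 → ∀ t : ℝ, 0 ≤ t → ∀ v : V3,
        ∀ f : V3 → ℝ, Measurable f → ∀ M : ℝ,
          (∀ u, |wgt q ϑ β u t * f u| ≤ M) →
          wgt q ϑ β v t *
              (∫ u in {u : V3 | ‖v - u‖ ≤ 2 * ε}, ∫ ω : Metric.sphere (0 : V3) 1,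
                Bker γ q₀ u v ↑ω * Real.sqrt (gMaxw u) *
                  (Real.sqrt (gMaxw v) * |f u|
                    + Real.sqrt (gMaxw (vPost u v ↑ω)) * |f (uPost u v ↑ω)|
                    + Real.sqrt (gMaxw (uPost u v ↑ω)) * |f (vPost u v ↑ω)|) ∂sphMeasure)
            ≤ C * gMaxw v ^ ((1 - q) / 8) * ε ^ (γ + 3) * M := by
  obtain ⟨K, hK, hgauss⟩ :=
    exists_one_add_rpow_mul_exp_le_gMaxw_rpow (p := (1 - q) / 8) hβ (by linarith)
  have hdim : (Module.finrank ℝ V3 : ℝ) = 3 := by simp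
  have hγ : -(Module.finrank ℝ V3 : ℝ) < γ := by rw [hdim]; exact hγl
  have hC₀ := nonneg_of_forall_le_mul_abs hq₀
  set A := sphMeasure.real univ * (3 * volume.real (ball (0 : V3) 1) / (γ + 3) * 2 ^ (γ + 3)) *
    (C₀ * (3 * ((2 * π) ^ (-(3 : ℝ) / 2) * exp 1)))
  have hA : 0 ≤ A := mul_nonneg (mul_nonneg measureReal_nonneg
    (mul_nonneg (div_nonneg (by positivity) (by linarith)) (by positivity)))
    (mul_nonneg hC₀ (by positivity))
  refine ⟨A * K + 1, by nlinarith, fun ε hε hε1 t ht v f _ M hf => ?_⟩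
  have hM : 0 ≤ M := (abs_nonneg _).trans (hf v)
  have hμ : 0 ≤ gMaxw v ^ ((1 - q) / 8) := rpow_nonneg (by unfold gMaxw; positivity) _
  calc _ ≤ sphMeasure.real univ * ∫ u in {u : V3 | ‖v - u‖ ≤ 2 * ε}, ‖v - u‖ ^ γ *
          (C₀ * (3 * ((2 * π) ^ (-(3 : ℝ) / 2) * exp 1 * M *
            ((1 + ‖v‖ ^ 2) ^ β * exp (-(‖v‖ ^ 2 / 8)))))) :=
        mul_setIntegral_integral_le (measurableSet_norm_sub_le v _) (wgt_pos ..).le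
          (fun u ω => mul_nonneg
            (mul_nonneg (Bker_nonneg (fun s => (hq₀ s).1) u v ω) (sqrt_nonneg _)) (by positivity))
          ((integrableOn_norm_sub_rpow volume hγ v _).mul_const _)
          (fun u hu ω => wgt_mul_Bker_integrand_le hβ hq0.le hq1.le hϑ ht hq₀ hf
            (norm_eq_of_mem_sphere ω) (hu.trans (by linarith)))
    _ = A * ((1 + ‖v‖ ^ 2) ^ β * exp (-(‖v‖ ^ 2 / 8))) * ε ^ (γ + 3) * M := by
        rw [integral_mul_const, setIntegral_norm_sub_rpow volume hγ v (by positivity), hdim,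
          mul_rpow (by norm_num) hε.le]
        ring
    _ ≤ A * (K * gMaxw v ^ ((1 - q) / 8)) * ε ^ (γ + 3) * M := by
        gcongr A * ?_ * _ * _; exact hgauss v
    _ ≤ (A * K + 1) * gMaxw v ^ ((1 - q) / 8) * ε ^ (γ + 3) * M := by
        rw [← mul_assoc]; gcongr; linarith

/-- first estimate of Lemma 2.3: smallness of the near-singular part
`K^{1-χ}` of the linearized operator. -/
theorem stmt8_small_singular_part
    (γ q ϑ β C₀ : ℝ) (q₀ : ℝ → ℝ)
    (hγl : -3 < γ) (hγu : γ < 0) (hβ : 0 ≤ β) (hq0 : 0 < q) (hq1 : q < 1) (hϑ : 0 ≤ ϑ)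
    (hq₀meas : Measurable q₀) (hq₀ : ∀ s : ℝ, 0 ≤ q₀ s ∧ q₀ s ≤ C₀ * |s|) :
    ∃ C : ℝ, 0 < C ∧
      ∀ ε : ℝ, 0 < ε → ε < 1 → ∀ t : ℝ, 0 ≤ t → ∀ v : V3,
        ∀ f : V3 → ℝ, Measurable f → ∀ M : ℝ,
          (∀ u, |wgt q ϑ β u t * f u| ≤ M) →
          wgt q ϑ β v t *
              (∫ u in {u : V3 | ‖v - u‖ ≤ 2 * ε}, ∫ ω : Metric.sphere (0 : V3) 1,
                Bker γ q₀ u v ↑ω * Real.sqrt (gMaxw u) *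
                  (Real.sqrt (gMaxw v) * |f u|
                    + Real.sqrt (gMaxw (vPost u v ↑ω)) * |f (uPost u v ↑ω)|
                    + Real.sqrt (gMaxw (uPost u v ↑ω)) * |f (vPost u v ↑ω)|) ∂sphMeasure)
            ≤ C * gMaxw v ^ ((1 - q) / 8) * ε ^ (γ + 3) * M :=
  stmt8_small_singular_part_general γ q ϑ β C₀ q₀ hγl hβ hq0 hq1 hϑ hq₀
end
end

section
/- Negativity of the exponent quadratic form (equation (2.20)): Let 0 < q̃ < s₀ < 1. There exist constants C > 0 and ε₀ > 0 such that for all ε ∈ (0, ε₀], all v ∈ ℝ³ and all η ∈ ℝ³ \ {0}: -((s₀ - 8ε)/8)|η|² - (s₀/8)(|η|² - 2 v·η)²/|η|² - (q̃/4)(|η|² - 2 v·η) ≤ -C(|η|²/2 + |v·η|). -/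
noncomputable section

open MeasureTheory Real
open scoped ENNReal

/-! Writing `x = |η|²`, `p = v·η` and `y = x - 2p`, the exponent times `x` is minus the binary
quadratic form `((s₀ - 8ε)/8) x² + (q̃/4) x y + (s₀/8) y²`. It decreases in `ε`, and at `ε = ε₀`
its discriminant is negative because `q̃ < s₀`, so it dominates a multiple of `x² + y²`.
Finally `x² + y² ≥ (2/3) x (x + |y|)` and `x/2 + |p| ≤ x + |y|`. -/

theorem binary_quadratic_coercive {a b c : ℝ} (hac : 0 < a + c) (x y : ℝ) :
    (4 * a * c - b ^ 2) / (4 * (a + c)) * (x ^ 2 + y ^ 2) ≤ a * x ^ 2 + b * x * y + c * y ^ 2 := by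
  have hsos : 4 * (a + c) * (a * x ^ 2 + b * x * y + c * y ^ 2) - (4 * a * c - b ^ 2) * (x ^ 2 + y ^ 2)
      = (2 * a * x + b * y) ^ 2 + (b * x + 2 * c * y) ^ 2 := by ring
  rw [div_mul_eq_mul_div, div_le_iff₀ (by positivity)]
  linarith [hsos, sq_nonneg (2 * a * x + b * y), sq_nonneg (b * x + 2 * c * y)]

theorem quadratic_div_le_of_coercive {a b c δ x y : ℝ} (hx : 0 < x) (hδ : 0 ≤ δ)
    (hcoer : δ * (x ^ 2 + y ^ 2) ≤ a * x ^ 2 + b * x * y + c * y ^ 2) :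
    -a * x - c * y ^ 2 / x - b * y ≤ -(2 / 3 * δ) * (x + |y|) := by
  have hsq : 2 * (x * (x + |y|)) ≤ 3 * (x ^ 2 + y ^ 2) := by
    nlinarith [sq_nonneg (x - |y|), sq_abs y]
  have hdiv : c * y ^ 2 / x * x = c * y ^ 2 := div_mul_cancel₀ _ hx.ne'
  have hmul : (-a * x - c * y ^ 2 / x - b * y) * x ≤ -(2 / 3 * δ) * (x + |y|) * x := by
    nlinarith [mul_le_mul_of_nonneg_left hsq hδ]
  exact le_of_mul_le_mul_right hmul hx

theorem half_add_abs_le_add_abs_sub {x p : ℝ} (hx : 0 ≤ x) : x / 2 + |p| ≤ x + |x - 2 * p| := by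
  have h := abs_sub x (x - 2 * p)
  rw [abs_of_nonneg hx, sub_sub_cancel, abs_mul, abs_two] at h
  linarith [abs_nonneg (x - 2 * p)]

theorem stmt11_exponent_negativity_general
    (qt s₀ : ℝ) (hq : 0 < qt) (hqs : qt < s₀) :
    ∃ C ε₀ : ℝ, 0 < C ∧ 0 < ε₀ ∧ ∀ ε : ℝ, 0 < ε → ε ≤ ε₀ → ∀ v η : V3, η ≠ 0 →
      -((s₀ - 8 * ε) / 8) * ‖η‖ ^ 2 - s₀ / 8 * (‖η‖ ^ 2 - 2 * rinner v η) ^ 2 / ‖η‖ ^ 2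
          - qt / 4 * (‖η‖ ^ 2 - 2 * rinner v η)
        ≤ -C * (‖η‖ ^ 2 / 2 + |rinner v η|) := by
  -- `(s₀ + q̃)/16` is the `x²`-coefficient `(s₀ - 8ε)/8` at `ε = ε₀ = (s₀ - q̃)/16`.
  set δ := (4 * ((s₀ + qt) / 16) * (s₀ / 8) - (qt / 4) ^ 2) / (4 * ((s₀ + qt) / 16 + s₀ / 8))
  have hdisc : (qt / 4) ^ 2 < 4 * ((s₀ + qt) / 16) * (s₀ / 8) := by nlinarith
  have hδ : 0 < δ := div_pos (by linarith) (by linarith)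
  refine ⟨2 / 3 * δ, (s₀ - qt) / 16, by positivity, by linarith, ?_⟩
  intro ε _ hε v η hη
  set x := ‖η‖ ^ 2
  set p := rinner v η
  have hx : 0 < x := by positivity
  have hcoer : δ * (x ^ 2 + (x - 2 * p) ^ 2)
      ≤ (s₀ - 8 * ε) / 8 * x ^ 2 + qt / 4 * x * (x - 2 * p) + s₀ / 8 * (x - 2 * p) ^ 2 := by
    have hform := binary_quadratic_coercive (a := (s₀ + qt) / 16) (b := qt / 4) (c := s₀ / 8)
      (by linarith) x (x - 2 * p)
    have hcoef : (s₀ + qt) / 16 ≤ (s₀ - 8 * ε) / 8 := by linarith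
    linarith [hform, mul_le_mul_of_nonneg_right hcoef (sq_nonneg x)]
  calc _ ≤ -(2 / 3 * δ) * (x + |x - 2 * p|) := by
          simpa only [mul_div_assoc] using quadratic_div_le_of_coercive hx hδ.le hcoer
    _ ≤ -(2 / 3 * δ) * (x / 2 + |p|) :=
          mul_le_mul_of_nonpos_left (half_add_abs_le_add_abs_sub hx.le) (by linarith)

/-- equation (2.20): negativity of the exponent quadratic form. -/
theorem stmt11_exponent_negativity
    (qt s₀ : ℝ) (hq : 0 < qt) (hqs : qt < s₀) (hs : s₀ < 1) :
    ∃ C ε₀ : ℝ, 0 < C ∧ 0 < ε₀ ∧ ∀ ε : ℝ, 0 < ε → ε ≤ ε₀ → ∀ v η : V3, η ≠ 0 →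
      -((s₀ - 8 * ε) / 8) * ‖η‖ ^ 2 - s₀ / 8 * (‖η‖ ^ 2 - 2 * rinner v η) ^ 2 / ‖η‖ ^ 2
          - qt / 4 * (‖η‖ ^ 2 - 2 * rinner v η)
        ≤ -C * (‖η‖ ^ 2 / 2 + |rinner v η|) :=
  stmt11_exponent_negativity_general qt s₀ hq hqs

end
end

section
/- Lower bound of the time-modified collision frequency (equation (3.4)): Let -3 < γ < 0, ϑ > 0, 0 < q < 1 and c₁ > 0. Then there exists a constant C > 0 (depending on γ, ϑ, q, c₁) such that for all t ≥ 0 and all v ∈ ℝ³: c₁ (1+|v|²)^{γ/2} + ϑ q |v|² / (8(1+t)^{ϑ+1}) ≥ C (1+t)^{(1+ϑ)γ/(2-γ)}. In particular, if ν(v) ≥ c₁(1+|v|²)^{γ/2}, then the modified collision frequency ν̃(v,t) = ν(v) + ϑq|v|²/(8(1+t)^{ϑ+1}) satisfies ν̃(v,t) ≥ C(1+t)^{(1+ϑ)γ/(2-γ)}, and the exponent satisfies 0 > (1+ϑ)γ/(2-γ) > -1 when ϑ < -2/γ. -/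
noncomputable section

open MeasureTheory Real
open scoped ENNReal

/-!
Put `s = 1 + t`, `x = |v|²` and `y = s^α` with `α = 2(1+ϑ)/(2-γ)`, the exponent that balances
`y^{γ/2} = y / s^{1+ϑ}`. For `x ≤ y` the soft-potential term is at least `c₁ (2y)^{γ/2}`, and for
`x ≥ y` the weight term is at least `ϑq y / (8 s^{1+ϑ})`; both are constant multiples of
`s^{(1+ϑ)γ/(2-γ)}`.
-/

theorem min_le_rpow_one_add_add_mul {γ c k x y : ℝ} (hγ : γ ≤ 0) (hc : 0 ≤ c) (hk : 0 ≤ k)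
    (hx : 0 ≤ x) (hy : 1 ≤ y) :
    min (c * (2 * y) ^ (γ / 2)) (k * y) ≤ c * (1 + x) ^ (γ / 2) + k * x := by
  rcases le_total x y with hxy | hyx
  · have hsoft : c * (2 * y) ^ (γ / 2) ≤ c * (1 + x) ^ (γ / 2) :=
      mul_le_mul_of_nonneg_left
        (rpow_le_rpow_of_nonpos (by positivity) (by linarith) (by linarith)) hc
    linarith [min_le_left (c * (2 * y) ^ (γ / 2)) (k * y), mul_nonneg hk hx]
  · have hsoft : 0 ≤ c * (1 + x) ^ (γ / 2) := by positivity
    linarith [min_le_right (c * (2 * y) ^ (γ / 2)) (k * y), mul_le_mul_of_nonneg_left hyx hk]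

theorem min_mul_rpow_le_rpow_one_add_add_div {γ m c k x s : ℝ} (hγ : γ ≤ 0) (hm : 0 ≤ m)
    (hc : 0 ≤ c) (hk : 0 ≤ k) (hx : 0 ≤ x) (hs : 1 ≤ s) :
    min (c * 2 ^ (γ / 2)) k * s ^ (m * γ / (2 - γ)) ≤ c * (1 + x) ^ (γ / 2) + k * x / s ^ m := by
  have hs0 : 0 < s := by linarith
  have h2γ : 2 - γ ≠ 0 := by linarith
  set α := 2 * m / (2 - γ) with hα_def
  have hα : 0 ≤ α := div_nonneg (by linarith) (by linarith)
  have hsoft : c * (2 * s ^ α) ^ (γ / 2) = c * 2 ^ (γ / 2) * s ^ (m * γ / (2 - γ)) := by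
    have : α * (γ / 2) = m * γ / (2 - γ) := by rw [hα_def]; field_simp
    rw [mul_rpow zero_le_two (rpow_nonneg hs0.le α), ← rpow_mul hs0.le, this, mul_assoc]
  have hweight : k / s ^ m * s ^ α = k * s ^ (m * γ / (2 - γ)) := by
    have : α - m = m * γ / (2 - γ) := by rw [hα_def]; field_simp; ring
    rw [div_mul_eq_mul_div, mul_div_assoc, ← rpow_sub hs0, this]
  have key := min_le_rpow_one_add_add_mul hγ hc (div_nonneg hk (rpow_nonneg hs0.le m)) hx
    (one_le_rpow hs hα)
  rw [hsoft, hweight, ← min_mul_of_nonneg _ _ (rpow_nonneg hs0.le _)] at key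
  simpa only [mul_div_right_comm] using key

theorem neg_one_lt_mul_div_and_lt_zero {γ ϑ : ℝ} (hγ : γ < 0) (hϑ : 0 < 1 + ϑ)
    (hϑγ : ϑ < -2 / γ) : -1 < (1 + ϑ) * γ / (2 - γ) ∧ (1 + ϑ) * γ / (2 - γ) < 0 := by
  have h2γ : 0 < 2 - γ := by linarith
  rw [lt_div_iff_of_neg hγ] at hϑγ
  exact ⟨by rw [lt_div_iff₀ h2γ]; linarith, div_neg_of_neg_of_pos (mul_neg_of_pos_of_neg hϑ hγ) h2γ⟩

theorem stmt18_nutilde_lower_bound_general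
    (γ ϑ q c₁ : ℝ) (q₀ : ℝ → ℝ)
    (hγu : γ < 0) (hϑ : 0 < ϑ) (hq0 : 0 < q)
    (hc₁ : 0 < c₁) :
    (∃ C : ℝ, 0 < C ∧
      (∀ t : ℝ, 0 ≤ t → ∀ v : V3,
        C * (1 + t) ^ ((1 + ϑ) * γ / (2 - γ)) ≤
          c₁ * (1 + ‖v‖ ^ 2) ^ (γ / 2) + ϑ * q * ‖v‖ ^ 2 / (8 * (1 + t) ^ (ϑ + 1))) ∧
      (∀ t : ℝ, 0 ≤ t → ∀ v : V3,
        c₁ * (1 + ‖v‖ ^ 2) ^ (γ / 2) ≤ nuColl γ q₀ v →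
          C * (1 + t) ^ ((1 + ϑ) * γ / (2 - γ)) ≤ nuTilde γ q ϑ q₀ v t)) ∧
    (ϑ < -2 / γ → -1 < (1 + ϑ) * γ / (2 - γ) ∧ (1 + ϑ) * γ / (2 - γ) < 0) := by
  have hbound : ∀ t : ℝ, 0 ≤ t → ∀ v : V3,
      min (c₁ * 2 ^ (γ / 2)) (ϑ * q / 8) * (1 + t) ^ ((1 + ϑ) * γ / (2 - γ)) ≤
        c₁ * (1 + ‖v‖ ^ 2) ^ (γ / 2) + ϑ * q * ‖v‖ ^ 2 / (8 * (1 + t) ^ (ϑ + 1)) := by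
    intro t ht v
    have := min_mul_rpow_le_rpow_one_add_add_div hγu.le (by linarith : 0 ≤ 1 + ϑ) hc₁.le
      (by positivity : 0 ≤ ϑ * q / 8) (sq_nonneg ‖v‖) (by linarith : 1 ≤ 1 + t)
    have hweight : ϑ * q * ‖v‖ ^ 2 / (8 * (1 + t) ^ (ϑ + 1))
        = ϑ * q / 8 * ‖v‖ ^ 2 / (1 + t) ^ (1 + ϑ) := by
      rw [add_comm ϑ 1]; ring
    rwa [hweight]
  refine ⟨⟨_, by positivity, hbound, fun t ht v hν => ?_⟩,
    neg_one_lt_mul_div_and_lt_zero hγu (by linarith)⟩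
  rw [nuTilde]
  linarith [hbound t ht v]

/-- equation (3.4): lower bound of the time-modified collision
frequency, with the exponent range `(1+ϑ)γ/(2-γ) ∈ (-1,0)` when `ϑ < -2/γ`. -/
theorem stmt18_nutilde_lower_bound
    (γ ϑ q c₁ : ℝ) (q₀ : ℝ → ℝ)
    (hγl : -3 < γ) (hγu : γ < 0) (hϑ : 0 < ϑ) (hq0 : 0 < q) (hq1 : q < 1)
    (hc₁ : 0 < c₁) :
    (∃ C : ℝ, 0 < C ∧
      (∀ t : ℝ, 0 ≤ t → ∀ v : V3,
        C * (1 + t) ^ ((1 + ϑ) * γ / (2 - γ)) ≤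
          c₁ * (1 + ‖v‖ ^ 2) ^ (γ / 2) + ϑ * q * ‖v‖ ^ 2 / (8 * (1 + t) ^ (ϑ + 1))) ∧
      (∀ t : ℝ, 0 ≤ t → ∀ v : V3,
        c₁ * (1 + ‖v‖ ^ 2) ^ (γ / 2) ≤ nuColl γ q₀ v →
          C * (1 + t) ^ ((1 + ϑ) * γ / (2 - γ)) ≤ nuTilde γ q ϑ q₀ v t)) ∧
    (ϑ < -2 / γ → -1 < (1 + ϑ) * γ / (2 - γ) ∧ (1 + ϑ) * γ / (2 - γ) < 0) :=
  stmt18_nutilde_lower_bound_general γ ϑ q c₁ q₀ hγu hϑ hq0 hc₁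

end
end
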